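/- arXiv:math/0411193 — 5 statements merged into one kernel-verified Lean document; each statement's English description precedes it below -/
import Mathlib

section
/- Let p = 4k+2 with k ≥ 1, W the dihedral group of order 2p generated by s₁, s₂ as usual, H₁ = ⟨t₁, t₂⟩ with t₁ = s₁, t₂ = s₂s₁s₂ (so H₁ is dihedral of order 2(2k+1)). There is no l ∈ {0, 1, ..., 2k} such that the pair (t₁, (t₁t₂)^l) satisfies the braid-type relation ω(t₁, (t₁t₂)^l : p) = ω((t₁t₂)^l, t₁ : p) and generates H₁. In other words, if x = t₁ and y = (t₁t₂)^l satisfy (xy)^{2k+1} = (yx)^{2k+1}, then (t₁t₂)^{2l} = 1, forcing l = 0. -/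
open DihedralGroup

private lemma r_pow_aux {m : ℕ} (a : ZMod m) (n : ℕ) :
    (DihedralGroup.r a) ^ n = DihedralGroup.r ((n : ZMod m) * a) := by
  induction n with
  | zero => simp
  | succ n ih =>
      rw [pow_succ, ih, DihedralGroup.r_mul_r]
      congr 1
      push_cast
      ring

private lemma sr_pow_odd {m : ℕ} (a : ZMod m) (j : ℕ) :
    (DihedralGroup.sr a) ^ (2 * j + 1) = DihedralGroup.sr a := by
  induction j with
  | zero => simp
  | succ j ih =>
      have : 2 * (j + 1) + 1 = (2 * j + 1) + 2 := by ring
      rw [this, pow_add, ih, pow_two, DihedralGroup.sr_mul_sr]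
      simp

/-- Let p = 4k+2 (k ≥ 1), W the dihedral group of order 2p,
t₁ = s₁ = sr 0, t₂ = s₂s₁s₂ = sr 1 * sr 0 * sr 1, H₁ = ⟨t₁, t₂⟩.  For
l ∈ {0,…,2k}, if x = t₁ and y = (t₁t₂)^l satisfy the braid-type relation
(xy)^(2k+1) = (yx)^(2k+1), then (t₁t₂)^(2l) = 1 and l = 0; and there is no such
l for which the relation holds and the pair (x, y) generates H₁. -/
theorem stmt7 (k : ℕ) (hk : 1 ≤ k) :
    let p := 4 * k + 2
    let t₁ : DihedralGroup p := DihedralGroup.sr 0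
    let t₂ : DihedralGroup p := DihedralGroup.sr 1 * DihedralGroup.sr 0 * DihedralGroup.sr 1
    ∀ l : ℕ, l ≤ 2 * k →
      (((t₁ * (t₁ * t₂) ^ l) ^ (2 * k + 1) = ((t₁ * t₂) ^ l * t₁) ^ (2 * k + 1)) →
        (t₁ * t₂) ^ (2 * l) = 1 ∧ l = 0) ∧
      ¬(((t₁ * (t₁ * t₂) ^ l) ^ (2 * k + 1) = ((t₁ * t₂) ^ l * t₁) ^ (2 * k + 1)) ∧
        Subgroup.closure {t₁, (t₁ * t₂) ^ l} = Subgroup.closure {t₁, t₂}) := by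
  intro p t₁ t₂ l hl
  have ht2 : t₂ = DihedralGroup.sr (2 : ZMod p) := by
    show DihedralGroup.sr 1 * DihedralGroup.sr 0 * DihedralGroup.sr 1 = _
    rw [DihedralGroup.sr_mul_sr, DihedralGroup.r_mul_sr]
    norm_num
  have ht12 : t₁ * t₂ = DihedralGroup.r (2 : ZMod p) := by
    rw [ht2]; show DihedralGroup.sr 0 * _ = _
    rw [DihedralGroup.sr_mul_sr]; norm_num
  -- main implication
  have main : ((t₁ * (t₁ * t₂) ^ l) ^ (2 * k + 1) = ((t₁ * t₂) ^ l * t₁) ^ (2 * k + 1)) →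
      (t₁ * t₂) ^ (2 * l) = 1 ∧ l = 0 := by
    intro hrel
    rw [ht12, r_pow_aux] at hrel
    have hx : t₁ * DihedralGroup.r ((l : ZMod p) * 2) = DihedralGroup.sr ((l : ZMod p) * 2) := by
      show DihedralGroup.sr 0 * _ = _
      rw [DihedralGroup.sr_mul_r]; ring_nf
    have hy : DihedralGroup.r ((l : ZMod p) * 2) * t₁ = DihedralGroup.sr (-((l : ZMod p) * 2)) := by
      show _ * DihedralGroup.sr 0 = _
      rw [DihedralGroup.r_mul_sr]; ring_nf
    rw [hx, hy, sr_pow_odd, sr_pow_odd, DihedralGroup.sr.injEq] at hrel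
    have h4 : ((4 * l : ℕ) : ZMod p) = 0 := by
      push_cast
      linear_combination hrel
    have hdvd : p ∣ 4 * l := (ZMod.natCast_eq_zero_iff _ _).mp h4
    have hl0 : l = 0 := by
      obtain ⟨c, hc⟩ := hdvd
      have hc' : 4 * l = (4 * k + 2) * c := hc
      have hlt : (4 * k + 2) * c < (4 * k + 2) * 2 := by omega
      have hc2 : c < 2 := lt_of_mul_lt_mul_left hlt (by omega)
      interval_cases c <;> omega
    subst hl0
    simp
  refine ⟨main, ?_⟩
  rintro ⟨hrel, hclos⟩
  have hl0 := (main hrel).2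
  subst hl0
  simp only [pow_zero] at hclos
  -- closure {t₁, 1} = {1, sr 0} cannot contain r 2
  have hmem : DihedralGroup.r (2 : ZMod p) ∈ Subgroup.closure ({t₁, t₂} : Set (DihedralGroup p)) := by
    rw [← ht12]
    exact mul_mem (Subgroup.subset_closure (by simp)) (Subgroup.subset_closure (by simp))
  rw [← hclos] at hmem
  -- the subgroup with carrier {1, sr 0}
  have hle : Subgroup.closure ({t₁, 1} : Set (DihedralGroup p)) ≤
      Subgroup.closure ({t₁} : Set (DihedralGroup p)) := by
    apply Subgroup.closure_le _ |>.mpr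
    rintro x (rfl | rfl)
    · exact Subgroup.subset_closure rfl
    · exact one_mem _
  have hmem2 := hle hmem
  rw [Subgroup.mem_closure_singleton] at hmem2
  obtain ⟨n, hn⟩ := hmem2
  have hsq : (t₁ : DihedralGroup p) ^ (2 : ℤ) = 1 := by
    show DihedralGroup.sr 0 ^ (2 : ℤ) = 1
    rw [zpow_two, DihedralGroup.sr_mul_sr]
    simp
  have hcase : t₁ ^ n = 1 ∨ t₁ ^ n = t₁ := by
    rcases Int.even_or_odd n with ⟨c, hc⟩ | ⟨c, hc⟩
    · left; rw [hc]
      rw [show c + c = 2 * c by ring, zpow_mul, hsq, one_zpow]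
    · right; rw [hc]
      have : t₁ ^ (2 * c + 1) = (t₁ ^ (2:ℤ)) ^ c * t₁ ^ (1:ℤ) := by
        rw [← zpow_mul, ← zpow_add]
      rw [this, hsq, one_zpow, zpow_one, one_mul]
  have hp2 : (2 : ZMod p) ≠ 0 := by
    have : ((2 : ℕ) : ZMod p) ≠ 0 := by
      rw [Ne, ZMod.natCast_eq_zero_iff]
      intro h
      have h2 := Nat.le_of_dvd (by norm_num) h
      have : (4 : ℕ) * k + 2 ≤ 2 := h2
      omega
    simpa using this
  rcases hcase with h | h <;> rw [hn] at h
  · rw [DihedralGroup.one_def, DihedralGroup.r.injEq] at h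
    exact hp2 h
  · exact absurd h (by simp [t₁])
end

section
/- Let A(Bₙ) be the Artin group of type Bₙ (generators σ₁,...,σₙ with σ₁σ₂σ₁σ₂ = σ₂σ₁σ₂σ₁, σᵢσ_{i+1}σᵢ = σ_{i+1}σᵢσ_{i+1} for 2 ≤ i ≤ n-1, and σᵢσⱼ = σⱼσᵢ for |i-j| ≥ 2), n odd, and W = (C₂)ⁿ ⋊ Symₙ with w₀ = (-1,...,-1) central. Then the assignment σ₁ ↦ w₀s₁, σᵢ ↦ sᵢ (2 ≤ i ≤ n) extends to a group homomorphism μ' : A(Bₙ) → W whose image together with the center Z(W) generates W, but whose image is a proper subgroup of W. -/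
/-- The action of `Symₙ` on `(C₂)ⁿ` by permuting coordinates. -/
def hyperAct (n : ℕ) : Equiv.Perm (Fin n) →* MulAut (Fin n → ℤˣ) where
  toFun π :=
    { toFun := fun v => v ∘ π.symm
      invFun := fun v => v ∘ π
      left_inv := fun v => by ext i; simp
      right_inv := fun v => by ext i; simp
      map_mul' := fun v w => rfl }
  map_one' := by ext v i; rfl
  map_mul' := fun π τ => by ext v i; rfl

/-- The hyperoctahedral group `(C₂)ⁿ ⋊ Symₙ` (Coxeter group of type Bₙ). -/
abbrev HypGroup (n : ℕ) := (Fin n → ℤˣ) ⋊[hyperAct n] Equiv.Perm (Fin n)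

/-- The sign vector with `-1` in position `i` and `1` elsewhere. -/
def eVec (n : ℕ) (i : Fin n) : Fin n → ℤˣ := fun j => if j = i then -1 else 1

/-- The longest element `w₀ = (-1, …, -1)`. -/
def hypW0 (n : ℕ) : HypGroup n := SemidirectProduct.inl (fun _ => -1)

/-- The standard Coxeter generators of type Bₙ: `s₁ = e₁` (sign change in the
first coordinate) and `sᵢ = (i-1, i)` for `i ≥ 2` (0-indexed here). -/
def sgen (n : ℕ) (i : Fin n) : HypGroup n :=
  if (i : ℕ) = 0 then SemidirectProduct.inl (eVec n i)
  else SemidirectProduct.inr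
    (Equiv.swap ⟨(i : ℕ) - 1, lt_of_le_of_lt (Nat.sub_le _ _) i.isLt⟩ i)

/-- The defining relations of the Artin group of type Bₙ (0-indexed generators
σ₀,…,σ_{n-1}): σ₀σ₁σ₀σ₁ = σ₁σ₀σ₁σ₀, σᵢσ_{i+1}σᵢ = σ_{i+1}σᵢσ_{i+1} for i ≥ 1,
and σᵢσⱼ = σⱼσᵢ for |i-j| ≥ 2. -/
def artinBRels (n : ℕ) : Set (FreeGroup (Fin n)) :=
  { r | (∃ i j : Fin n, (i : ℕ) = 0 ∧ (j : ℕ) = 1 ∧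
          r = (FreeGroup.of i * FreeGroup.of j) ^ 2 *
              ((FreeGroup.of j * FreeGroup.of i) ^ 2)⁻¹) ∨
        (∃ i j : Fin n, 1 ≤ (i : ℕ) ∧ (j : ℕ) = (i : ℕ) + 1 ∧
          r = FreeGroup.of i * FreeGroup.of j * FreeGroup.of i *
              (FreeGroup.of j * FreeGroup.of i * FreeGroup.of j)⁻¹) ∨
        (∃ i j : Fin n, (i : ℕ) + 2 ≤ (j : ℕ) ∧
          r = FreeGroup.of i * FreeGroup.of j *
              (FreeGroup.of j * FreeGroup.of i)⁻¹) }

/-! Since `w₀` is central, `μ'(σ₁) = w₀ s₁` agrees with `s₁` modulo `Z(W)`, so the image of `μ'`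
together with `Z(W)` contains all Coxeter generators `sᵢ`, which generate `W`. On the other hand,
the character `W → {±1}` multiplying the signs of the `(C₂)ⁿ`-component is trivial on the
transpositions `sᵢ` (`i ≥ 2`) and on `w₀ s₁`, which has `n - 1` signs equal to `-1`, an even number
when `n` is odd; but it sends `s₁` to `-1`, so `s₁` is not in the image of `μ'`. -/

open SemidirectProduct Equiv

theorem Subgroup.exists_mul_of_sup_eq_top {G : Type*} [Group G] {H N : Subgroup G} [N.Normal]
    (h : H ⊔ N = ⊤) (g : G) : ∃ x ∈ H, ∃ z ∈ N, g = x * z := by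
  have hg : g ∈ ((H ⊔ N : Subgroup G) : Set G) := by simp [h]
  rw [Subgroup.mul_normal] at hg
  obtain ⟨x, hx, z, hz, rfl⟩ := hg
  exact ⟨x, hx, z, hz, rfl⟩

section SemidirectProduct

variable {N G : Type*} [Group G]

theorem SemidirectProduct.inl_mul_inr_sq_comm [CommGroup N] {φ : G →* MulAut N} (x : N) {g : G}
    (hg : g * g = 1) : (inl x * inr g : N ⋊[φ] G) ^ 2 = (inr g * inl x) ^ 2 := by
  have hφ : ∀ y, φ g (φ g y) = y := fun y => by
    rw [← MulAut.mul_apply, ← map_mul, hg, map_one, MulAut.one_apply]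
  ext <;> simp [pow_two, hφ, hg, mul_comm]

theorem SemidirectProduct.commute_inl_inr [Group N] {φ : G →* MulAut N} {x : N} {g : G}
    (h : φ g x = x) : Commute (inl x : N ⋊[φ] G) (inr g) := by
  ext <;> simp [h]

end SemidirectProduct

theorem Equiv.swap_braid {α : Type*} [DecidableEq α] {a b c : α} (hab : a ≠ b) (hac : a ≠ c)
    (hbc : b ≠ c) :
    swap a b * swap b c * swap a b = swap b c * swap a b * swap b c := by
  have conj_left : swap b a * swap c b * swap b a = swap a c :=
    swap_mul_swap_mul_swap hbc.symm hac.symm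
  have conj_right : swap b c * swap a b * swap b c = swap c a := swap_mul_swap_mul_swap hab hac
  rw [swap_comm b a, swap_comm c b] at conj_left
  rw [conj_left, conj_right, swap_comm]

section HypGroup

variable {n : ℕ}

theorem hyperAct_mulSingle (π : Perm (Fin n)) (i : Fin n) (x : ℤˣ) :
    hyperAct n π (Pi.mulSingle i x) = Pi.mulSingle (π i) x := by
  have h := Pi.mulSingle_comp_equiv π.symm i x
  rwa [symm_symm] at h

theorem hyperAct_const (π : Perm (Fin n)) (x : ℤˣ) : hyperAct n π (fun _ => x) = fun _ => x :=
  rfl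

theorem eVec_eq_mulSingle (i : Fin n) : eVec n i = Pi.mulSingle i (-1) := by
  ext j
  simp [eVec, Pi.mulSingle_apply]

theorem hypW0_mem_center : hypW0 n ∈ Subgroup.center (HypGroup n) :=
  Subgroup.mem_center_iff.mpr fun g => by
    ext <;> simp [hypW0, hyperAct_const, mul_comm]

theorem sgen_of_val_eq_zero {i : Fin n} (hi : (i : ℕ) = 0) :
    sgen n i = inl (Pi.mulSingle i (-1)) := by
  rw [sgen, if_pos hi, eVec_eq_mulSingle]

theorem sgen_of_val_eq_succ {a i : Fin n} (h : (i : ℕ) = a + 1) :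
    sgen n i = inr (swap a i) := by
  rw [sgen, if_neg (by omega)]
  congr 3
  omega

theorem closure_range_sgen : Subgroup.closure (Set.range (sgen n)) = ⊤ := by
  set H := Subgroup.closure (Set.range (sgen n))
  have sgen_mem (i : Fin n) : sgen n i ∈ H := Subgroup.subset_closure ⟨i, rfl⟩
  have inr_mem (π : Perm (Fin n)) : inr π ∈ H := by
    obtain _ | m := n
    · rw [Subsingleton.elim π 1, map_one]
      exact H.one_mem
    have adjacent_le : Submonoid.closure (Set.range fun i : Fin m ↦ swap i.castSucc i.succ) ≤
        (H.comap inr).toSubmonoid := by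
      rw [Submonoid.closure_le]
      rintro _ ⟨i, rfl⟩
      rw [SetLike.mem_coe, Subgroup.mem_toSubmonoid, Subgroup.mem_comap,
        ← sgen_of_val_eq_succ (by simp)]
      exact sgen_mem _
    exact adjacent_le (by rw [Perm.mclosure_swap_castSucc_succ]; trivial)
  have mulSingle_mem (i : Fin n) (x : ℤˣ) : inl (Pi.mulSingle i x) ∈ H := by
    rcases Int.units_eq_one_or x with rfl | rfl
    · rw [Pi.mulSingle_one, map_one]
      exact H.one_mem
    · let i₀ : Fin n := ⟨0, i.pos⟩
      have conj := H.mul_mem (H.mul_mem (inr_mem (swap i₀ i)) (sgen_mem i₀))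
        (H.inv_mem (inr_mem (swap i₀ i)))
      rwa [sgen_of_val_eq_zero rfl, ← map_inv, ← inl_aut, hyperAct_mulSingle,
        swap_apply_left] at conj
  refine eq_top_iff.mpr fun g _ => ?_
  have inl_mem : g.left ∈ H.comap inl := by
    rw [← Finset.univ_prod_mulSingle g.left]
    exact Subgroup.prod_mem _ fun i _ => mulSingle_mem i _
  rw [← inl_left_mul_inr_right g]
  exact H.mul_mem inl_mem (inr_mem _)

def signProd (n : ℕ) : HypGroup n →* ℤˣ :=
  SemidirectProduct.lift (∏ i, Pi.evalMonoidHom (fun _ => ℤˣ) i) 1 fun π => by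
    refine MonoidHom.ext fun v => ?_
    simp only [MonoidHom.coe_comp, Function.comp_apply, MonoidHom.finsetProd_apply,
      Pi.evalMonoidHom_apply, MonoidHom.one_apply, map_one, MulAut.one_apply,
      MulEquiv.coe_toMonoidHom]
    exact Equiv.prod_comp π.symm v

@[simp]
theorem signProd_inl (v : Fin n → ℤˣ) : signProd n (inl v) = ∏ i, v i := by
  simp [signProd]

@[simp]
theorem signProd_inr (π : Perm (Fin n)) : signProd n (inr π) = 1 := by
  simp [signProd]

def twistedGen (n : ℕ) (i : Fin n) : HypGroup n :=
  if (i : ℕ) = 0 then hypW0 n * sgen n i else sgen n i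

theorem twistedGen_of_val_eq_zero {i : Fin n} (hi : (i : ℕ) = 0) :
    twistedGen n i = inl ((fun _ => -1) * Pi.mulSingle i (-1)) := by
  rw [twistedGen, if_pos hi, sgen_of_val_eq_zero hi, hypW0, ← map_mul]

theorem twistedGen_of_val_eq_succ {a i : Fin n} (h : (i : ℕ) = a + 1) :
    twistedGen n i = inr (swap a i) := by
  rw [twistedGen, if_neg (by omega), sgen_of_val_eq_succ h]

theorem lift_twistedGen_of_mem_artinBRels {r : FreeGroup (Fin n)} (hr : r ∈ artinBRels n) :
    FreeGroup.lift (twistedGen n) r = 1 := by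
  rcases hr with ⟨i, j, hi, hj, rfl⟩ | ⟨i, j, hi, hj, rfl⟩ | ⟨i, j, hij, rfl⟩
  · simp only [map_mul, map_pow, map_inv, FreeGroup.lift_apply_of, mul_inv_eq_one,
      twistedGen_of_val_eq_zero hi, twistedGen_of_val_eq_succ (a := i) (i := j) (by omega)]
    exact inl_mul_inr_sq_comm _ (swap_mul_self _ _)
  · let a : Fin n := ⟨i - 1, by omega⟩
    simp only [map_mul, map_inv, FreeGroup.lift_apply_of, mul_inv_eq_one,
      twistedGen_of_val_eq_succ (a := a) (show (i : ℕ) = a + 1 by simp [a]; omega),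
      twistedGen_of_val_eq_succ (a := i) hj]
    simp only [← map_mul, inr_inj]
    exact swap_braid (Fin.ne_of_val_ne (by simp [a]; omega))
      (Fin.ne_of_val_ne (by simp [a]; omega)) (Fin.ne_of_val_ne (by omega))
  · let b : Fin n := ⟨j - 1, by omega⟩
    have hb : (j : ℕ) = b + 1 := by simp [b]; omega
    simp only [map_mul, map_inv, FreeGroup.lift_apply_of, mul_inv_eq_one,
      twistedGen_of_val_eq_succ hb]
    rcases Nat.eq_zero_or_pos i with hi | hi
    · rw [twistedGen_of_val_eq_zero hi]
      refine (commute_inl_inr ?_).eq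
      rw [map_mul, hyperAct_const, hyperAct_mulSingle, swap_apply_of_ne_of_ne
        (Fin.ne_of_val_ne (by simp [b]; omega)) (Fin.ne_of_val_ne (by omega))]
    · let a : Fin n := ⟨i - 1, by omega⟩
      rw [twistedGen_of_val_eq_succ (a := a) (by simp [a]; omega), ← map_mul, ← map_mul, inr_inj]
      exact (Perm.disjoint_swap_swap (by simp [a, b, Fin.ext_iff]; omega)).commute.eq

def muPrime (n : ℕ) : PresentedGroup (artinBRels n) →* HypGroup n :=
  PresentedGroup.toGroup fun _ => lift_twistedGen_of_mem_artinBRels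

theorem muPrime_of (i : Fin n) : muPrime n (PresentedGroup.of i) = twistedGen n i :=
  PresentedGroup.toGroup.of _

theorem range_muPrime_sup_center : (muPrime n).range ⊔ Subgroup.center (HypGroup n) = ⊤ := by
  rw [eq_top_iff, ← closure_range_sgen, Subgroup.closure_le]
  rintro _ ⟨i, rfl⟩
  have twisted_mem : twistedGen n i ∈ (muPrime n).range ⊔ Subgroup.center (HypGroup n) :=
    Subgroup.mem_sup_left ⟨_, muPrime_of i⟩
  have w0_mem : hypW0 n ∈ (muPrime n).range ⊔ Subgroup.center (HypGroup n) :=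
    Subgroup.mem_sup_right hypW0_mem_center
  rw [twistedGen] at twisted_mem
  split_ifs at twisted_mem
  · simpa using Subgroup.mul_mem _ (Subgroup.inv_mem _ w0_mem) twisted_mem
  · exact twisted_mem

theorem signProd_comp_muPrime (hn : Odd n) : (signProd n).comp (muPrime n) = 1 := by
  refine PresentedGroup.ext fun i => ?_
  rw [MonoidHom.comp_apply, muPrime_of, MonoidHom.one_apply]
  by_cases hi : (i : ℕ) = 0
  · simp [twistedGen_of_val_eq_zero hi, hn.neg_one_pow]
  · rw [twistedGen_of_val_eq_succ (a := ⟨i - 1, by omega⟩) (by simp; omega), signProd_inr]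

theorem range_muPrime_ne_top (hn : Odd n) : (muPrime n).range ≠ ⊤ := fun htop => by
  have range_le := (MonoidHom.range_le_ker_iff _ _).mpr (signProd_comp_muPrime hn)
  have s0_mem := range_le (htop ▸ Subgroup.mem_top (sgen n ⟨0, hn.pos⟩))
  rw [MonoidHom.mem_ker, sgen_of_val_eq_zero rfl, signProd_inl] at s0_mem
  simp at s0_mem

end HypGroup

/-- For n odd, the assignment σ₁ ↦ w₀s₁, σᵢ ↦ sᵢ (i ≥ 2) extends
to a homomorphism μ' from the Artin group of type Bₙ to the hyperoctahedral
group W whose image together with the center Z(W) gives all of W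
(Im(μ')·Z(W) = W), but whose image is a proper subgroup of W. -/
theorem stmt10 (n : ℕ) (hn : Odd n) :
    ∃ μ' : PresentedGroup (artinBRels n) →* HypGroup n,
      (∀ i : Fin n, μ' (PresentedGroup.of i) =
        if (i : ℕ) = 0 then hypW0 n * sgen n i else sgen n i) ∧
      (∀ w : HypGroup n, ∃ h ∈ μ'.range,
        ∃ z ∈ Subgroup.center (HypGroup n), w = h * z) ∧
      μ'.range ≠ ⊤ :=
  ⟨muPrime n, muPrime_of, Subgroup.exists_mul_of_sup_eq_top range_muPrime_sup_center,
    range_muPrime_ne_top hn⟩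
end

section
/- Let W = (C₂)ⁿ ⋊ Symₙ. The subgroup of W generated by 1 together with {e_{i-1}sᵢ : 2 ≤ i ≤ n} (images under ν_n⁴ of the Artin generators, with σ₁ ↦ 1) together with the center Z(W) = {1, w₀} equals W when n is odd. -/
lemma hyperAct_apply (n : ℕ) (π : Equiv.Perm (Fin n)) (v : Fin n → ℤˣ) :
    hyperAct n π v = v ∘ π.symm := rfl

open SemidirectProduct Equiv in
lemma hypW0_central (n : ℕ) : hypW0 n ∈ Subgroup.center (HypGroup n) := by
  rw [Subgroup.mem_center_iff]
  intro g
  ext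
  · simp [hypW0, mul_left, left_inl, right_inl, hyperAct_apply, mul_comm]
  · simp [hypW0, mul_right, right_inl]

open SemidirectProduct Equiv in
lemma hyperAct_swap_eVec (n : ℕ) (x y : Fin n) :
    hyperAct n (Equiv.swap x y) (eVec n x) = eVec n y := by
  funext j
  show eVec n x ((Equiv.swap x y).symm j) = eVec n y j
  rw [Equiv.symm_swap]
  unfold eVec
  by_cases h : j = y
  · subst h; simp
  · rw [if_neg h, if_neg]
    intro hc
    apply h
    have := congrArg (Equiv.swap x y) hc
    simpa using this

open SemidirectProduct Equiv in
lemma sq_eq (n : ℕ) (a : Fin n → ℤˣ) (x y : Fin n) :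
    (inl a * inr (Equiv.swap x y) : HypGroup n) * (inl a * inr (Equiv.swap x y))
      = inl (a * hyperAct n (Equiv.swap x y) a) := by
  have h1 : (inr (Equiv.swap x y) : HypGroup n) * inl a
      = inl (hyperAct n (Equiv.swap x y) a) * inr (Equiv.swap x y) := by
    rw [inl_aut]; simp [mul_assoc, ← map_mul, Equiv.swap_mul_self]
  calc inl a * inr (Equiv.swap x y) * (inl a * inr (Equiv.swap x y))
      = inl a * (inr (Equiv.swap x y) * inl a) * inr (Equiv.swap x y) := by group
    _ = inl a * (inl (hyperAct n (Equiv.swap x y) a) * inr (Equiv.swap x y))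
          * inr (Equiv.swap x y) := by rw [h1]
    _ = inl (a * hyperAct n (Equiv.swap x y) a)
          * (inr (Equiv.swap x y) * inr (Equiv.swap x y)) := by
          rw [map_mul]; group
    _ = _ := by rw [← map_mul, Equiv.swap_mul_self, map_one, mul_one]

/-- tail vector: -1 at coordinate 0 and at coordinates ≥ m -/
def tVec (n m : ℕ) : Fin n → ℤˣ := fun j => if (j : ℕ) = 0 ∨ m ≤ (j : ℕ) then -1 else 1

lemma tVec_one (n : ℕ) : tVec n 1 = fun _ => -1 := by
  funext j; unfold tVec; rw [if_pos]; omega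

lemma tVec_n (n : ℕ) (h : 0 < n) : tVec n n = eVec n ⟨0, h⟩ := by
  funext j; unfold tVec eVec
  by_cases hj : (j : ℕ) = 0
  · rw [if_pos (Or.inl hj), if_pos (Fin.ext hj)]
  · rw [if_neg, if_neg]
    · intro hc; exact hj (congrArg Fin.val hc)
    · rintro (h1 | h2); exact hj h1; omega

lemma tVec_step (n m : ℕ) (hm : 1 ≤ m) (h : m + 1 < n) :
    tVec n (m + 2) = tVec n m *
      (eVec n ⟨m, by omega⟩ * eVec n ⟨m+1, h⟩) := by
  funext j
  unfold tVec eVec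
  simp only [Pi.mul_apply, Fin.ext_iff]
  by_cases h1 : (j : ℕ) = m
  · rw [if_neg (by omega), if_pos (by omega), if_pos h1, if_neg (by omega)]
    norm_num
  · by_cases h2 : (j : ℕ) = m + 1
    · rw [if_neg (by omega), if_pos (by omega), if_neg (by omega), if_pos h2]
      norm_num
    · rw [if_neg h1, if_neg h2, mul_one, mul_one]
      by_cases h3 : (j : ℕ) = 0 ∨ m ≤ (j : ℕ)
      · rw [if_pos (by omega), if_pos h3]
      · rw [if_neg (by omega), if_neg h3]

open SemidirectProduct Equiv in
lemma main_lemma (n : ℕ) (hn : Odd n) (H : Subgroup (HypGroup n))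
    (hg : ∀ m : ℕ, (h : m + 1 < n) →
      (inl (eVec n ⟨m, by omega⟩) * inr (Equiv.swap ⟨m, by omega⟩ ⟨m+1, h⟩) : HypGroup n) ∈ H)
    (hw : hypW0 n ∈ H) : H = ⊤ := by
  have npos : 0 < n := hn.pos
  -- pairs e_{m} e_{m+1} are in H (squares of the given generators)
  have hpair : ∀ m : ℕ, (h : m + 1 < n) →
      (inl (eVec n ⟨m, by omega⟩ * eVec n ⟨m+1, h⟩) : HypGroup n) ∈ H := by
    intro m h
    have := H.mul_mem (hg m h) (hg m h)
    rwa [sq_eq, hyperAct_swap_eVec] at this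
  -- e_0 ∈ H, using w₀ and the pairs (n odd)
  have he0 : (inl (eVec n ⟨0, npos⟩) : HypGroup n) ∈ H := by
    have key : ∀ k : ℕ, 2 * k + 1 ≤ n → (inl (tVec n (2 * k + 1)) : HypGroup n) ∈ H := by
      intro k
      induction k with
      | zero => intro _; simpa [tVec_one, hypW0] using hw
      | succ k ih =>
        intro hk
        have h1 : 2 * k + 1 + 1 < n := by omega
        have : tVec n (2 * (k+1) + 1) = tVec n (2*k+1) *
            (eVec n ⟨2*k+1, by omega⟩ * eVec n ⟨2*k+2, by omega⟩) := by
          have := tVec_step n (2*k+1) (by omega) h1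
          convert this using 2 <;> omega
        rw [this, map_mul]
        exact H.mul_mem (ih (by omega)) (hpair (2*k+1) h1)
    obtain ⟨K, hK⟩ := hn
    have := key K (by omega)
    rw [show 2 * K + 1 = n by omega, tVec_n n npos] at this
    exact this
  -- all eVec and adjacent swaps are in H
  have hstep : ∀ m : ℕ, (h : m < n) → (inl (eVec n ⟨m, h⟩) : HypGroup n) ∈ H ∧
      ∀ (h2 : m + 1 < n), (inr (Equiv.swap ⟨m, h⟩ ⟨m+1, h2⟩) : HypGroup n) ∈ H := by
    intro m
    induction m with
    | zero =>
      intro h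
      refine ⟨he0, fun h2 => ?_⟩
      have := H.mul_mem (H.inv_mem he0) (hg 0 h2)
      rwa [← mul_assoc, ← map_inv, ← map_mul, inv_mul_cancel, map_one, one_mul] at this
    | succ m ih =>
      intro h
      obtain ⟨hv, hs⟩ := ih (by omega)
      have hsw := hs h
      have hv' : (inl (eVec n ⟨m+1, h⟩) : HypGroup n) ∈ H := by
        have : (inl (hyperAct n (Equiv.swap ⟨m, by omega⟩ ⟨m+1, h⟩) (eVec n ⟨m, by omega⟩))
            : HypGroup n) ∈ H := by
          rw [inl_aut]
          exact H.mul_mem (H.mul_mem hsw hv) (H.inv_mem hsw)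
        rwa [hyperAct_swap_eVec] at this
      refine ⟨hv', fun h2 => ?_⟩
      have := H.mul_mem (H.inv_mem hv') (hg (m+1) h2)
      rwa [← mul_assoc, ← map_inv, ← map_mul, inv_mul_cancel, map_one, one_mul] at this
  -- conclude
  rw [eq_top_iff]
  rintro x -
  rw [← inl_left_mul_inr_right x]
  refine H.mul_mem ?_ ?_
  · -- left part: every sign vector is a product of eVec's
    have : x.left = ∏ i : Fin n, (if x.left i = -1 then eVec n i else 1) := by
      funext j
      rw [Finset.prod_apply]
      rw [Finset.prod_eq_single j]
      · rcases Int.units_eq_one_or (x.left j) with h | h <;>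
          simp [h, eVec]
      · intro i _ hij
        rcases Int.units_eq_one_or (x.left i) with h | h <;>
          simp [h, eVec, (Ne.symm hij : j ≠ i)]
      · simp
    have hm : x.left ∈ H.comap (inl : (Fin n → ℤˣ) →* HypGroup n) := by
      rw [this]
      refine Subgroup.prod_mem _ fun i _ => ?_
      by_cases h : x.left i = -1
      · rw [if_pos h]
        have := (hstep i.1 i.isLt).1
        simpa [Subgroup.mem_comap] using this
      · rw [if_neg h]; exact Subgroup.one_mem _
    exact hm
  · -- right part: permutations are generated by adjacent swaps
    obtain ⟨m, rfl⟩ : ∃ m, n = m + 1 := ⟨n - 1, by omega⟩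
    have htop := Equiv.Perm.mclosure_swap_castSucc_succ m
    have hx : x.right ∈ Submonoid.closure
        (Set.range fun i : Fin m => Equiv.swap i.castSucc i.succ) := htop ▸ Submonoid.mem_top _
    refine Submonoid.closure_induction ?_ (by simpa using H.one_mem)
      (fun a b _ _ ha hb => by rw [map_mul]; exact H.mul_mem ha hb) hx
    rintro s ⟨i, rfl⟩
    have := (hstep i.1 (by omega)).2 (by omega)
    convert this using 3 <;> exact Fin.ext (by simp)

/-- For n odd, the subgroup of W = (C₂)ⁿ ⋊ Symₙ generated by 1
together with the elements e_{i-1}sᵢ (2 ≤ i ≤ n; the ν_n⁴-images of the Artin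
generators, σ₁ ↦ 1) together with the center Z(W) = {1, w₀} is all of W. -/
theorem stmt12 (n : ℕ) (hn : Odd n) :
    Subgroup.closure
      ({(1 : HypGroup n)} ∪
        { g : HypGroup n | ∃ i : Fin n, 1 ≤ (i : ℕ) ∧
          g = SemidirectProduct.inl
                (eVec n ⟨(i : ℕ) - 1, lt_of_le_of_lt (Nat.sub_le _ _) i.isLt⟩) *
              sgen n i } ∪
        (Subgroup.center (HypGroup n) : Set (HypGroup n))) = ⊤ := by
  apply main_lemma n hn
  · intro m h
    apply Subgroup.subset_closure
    left; right
    refine ⟨⟨m+1, h⟩, by simp, ?_⟩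
    simp only [sgen]
    rw [if_neg (by simp)]
    rfl
  · exact Subgroup.subset_closure (Or.inr (hypW0_central n))
end

section
/- Let G₁, ..., G_p be groups, G = G₁ × ⋯ × G_p, and suppose for each j that H_j ≤ G is a subgroup with G = H₁·H₂⋯H_p and (H_j, H_l) = 1 for j ≠ l. If for a fixed non-abelian factor G_k (viewed via the projection κ_k : G → G_k) we know that for every pair of subgroups K₁, K₂ of G_k with K₁K₂ = G_k and (K₁,K₂)=1 either K₁ ⊆ Z(G_k) or K₂ ⊆ Z(G_k), then there is at most one index j with κ_k(H_j) ⊄ Z(G_k). -/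
lemma split_prod {Γ : Type*} [Group Γ] (K₁ K₂ : Subgroup Γ)
    (hc : ∀ x ∈ K₁, ∀ y ∈ K₂, x * y = y * x) :
    ∀ l : List Γ, (∀ x ∈ l, x ∈ K₁ ∨ x ∈ K₂) →
      ∃ a ∈ K₁, ∃ b ∈ K₂, l.prod = a * b := by
  intro l
  induction l with
  | nil => intro _; exact ⟨1, K₁.one_mem, 1, K₂.one_mem, by simp⟩
  | cons x l ih =>
    intro hl
    obtain ⟨a, ha, b, hb, hab⟩ := ih (fun y hy => hl y (List.mem_cons_of_mem _ hy))
    rcases hl x List.mem_cons_self with hx | hx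
    · exact ⟨x * a, K₁.mul_mem hx ha, b, hb, by simp [hab, mul_assoc]⟩
    · refine ⟨a, ha, x * b, K₂.mul_mem hx hb, ?_⟩
      simp only [List.prod_cons, hab]
      rw [← mul_assoc, ← hc a ha x hx, mul_assoc]

/-- Let G = G₁ × ⋯ × G_p and H₁, …, H_p be pairwise commuting
subgroups of G whose product is G.  Suppose the non-abelian factor G_k has the
property that whenever K₁, K₂ ≤ G_k commute elementwise and K₁K₂ = G_k, then
K₁ ⊆ Z(G_k) or K₂ ⊆ Z(G_k).  Then there is at most one index j with
κ_k(H_j) ⊄ Z(G_k), where κ_k is the projection onto G_k. -/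
theorem stmt16 (p : ℕ) (G : Fin p → Type*) [∀ j, Group (G j)]
    (H : Fin p → Subgroup (∀ j, G j))
    (hprod : ∀ g : ∀ j, G j, ∃ h : (j : Fin p) → (∀ j', G j'),
      (∀ j, h j ∈ H j) ∧ g = (List.ofFn h).prod)
    (hcomm : ∀ j l : Fin p, j ≠ l → ∀ x ∈ H j, ∀ y ∈ H l, x * y = y * x)
    (k : Fin p) (hna : ∃ a b : G k, a * b ≠ b * a)
    (hGk : ∀ K₁ K₂ : Subgroup (G k),
      (∀ x ∈ K₁, ∀ y ∈ K₂, x * y = y * x) →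
      (∀ g : G k, ∃ a ∈ K₁, ∃ b ∈ K₂, g = a * b) →
      K₁ ≤ Subgroup.center (G k) ∨ K₂ ≤ Subgroup.center (G k)) :
    ∀ j₁ j₂ : Fin p,
      ¬ (H j₁).map (Pi.evalMonoidHom G k) ≤ Subgroup.center (G k) →
      ¬ (H j₂).map (Pi.evalMonoidHom G k) ≤ Subgroup.center (G k) →
      j₁ = j₂ := by
  intro j₁ j₂ h₁ h₂
  by_contra hne
  set K₁ : Subgroup (G k) := (H j₁).map (Pi.evalMonoidHom G k) with hK₁
  set K₂ : Subgroup (G k) := Subgroup.centralizer (K₁ : Set (G k)) with hK₂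
  have hccomm : ∀ x ∈ K₁, ∀ y ∈ K₂, x * y = y * x := by
    intro x hx y hy
    exact Subgroup.mem_centralizer_iff.mp hy x hx
  -- elements of H j for j ≠ j₁ project into K₂
  have hmem : ∀ j : Fin p, j ≠ j₁ → ∀ y ∈ H j, (y k) ∈ K₂ := by
    intro j hj y hy
    rw [hK₂, Subgroup.mem_centralizer_iff]
    rintro _ ⟨x, hx, rfl⟩
    have := hcomm j₁ j (Ne.symm hj) x hx y hy
    have := congrFun this k
    simpa [Pi.evalMonoidHom] using this
  have hsurj : ∀ g : G k, ∃ a ∈ K₁, ∃ b ∈ K₂, g = a * b := by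
    intro g
    obtain ⟨h, hh, hg⟩ := hprod (Pi.mulSingle k g)
    have hg' : g = (List.ofFn fun j => h j k).prod := by
      have := congrArg (Pi.evalMonoidHom G k) hg
      rw [map_list_prod] at this
      simpa [Pi.evalMonoidHom, List.map_ofFn, Function.comp_def] using this
    have hall : ∀ x ∈ (List.ofFn fun j => h j k), x ∈ K₁ ∨ x ∈ K₂ := by
      intro x hx
      rw [List.mem_ofFn] at hx
      obtain ⟨j, rfl⟩ := hx
      by_cases hj : j = j₁
      · subst hj
        exact Or.inl ⟨h j, hh j, rfl⟩
      · exact Or.inr (hmem j hj (h j) (hh j))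
    obtain ⟨a, ha, b, hb, hab⟩ :=
      split_prod K₁ K₂ hccomm (List.ofFn fun j => h j k) hall
    exact ⟨a, ha, b, hb, hg'.trans hab⟩
  rcases hGk K₁ K₂ hccomm hsurj with hc | hc
  · exact h₁ hc
  · apply h₂
    rintro _ ⟨y, hy, rfl⟩
    exact hc (hmem j₂ (Ne.symm hne) y hy)
end

section
/- Let A be the Artin group of type I₂(p) with p = 4q (q ≥ 1), W the dihedral group of order 2p, and μ : A → W the standard epimorphism. For any endomorphism Φ : A → A, μ∘Φ is not equal to the extraordinary epimorphism ν_p¹ defined by ν_p¹(σ₁) = s₁, ν_p¹(σ₂) = s₂s₁. -/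
/-- The defining relation set of the Artin group of type I₂(p) for p even:
ω(σ₁,σ₂:p) = ω(σ₂,σ₁:p), i.e. (σ₁σ₂)^(p/2) = (σ₂σ₁)^(p/2). -/
def artinI2EvenRels (p : ℕ) : Set (FreeGroup (Fin 2)) :=
  { (FreeGroup.of 0 * FreeGroup.of 1) ^ (p / 2) *
      ((FreeGroup.of 1 * FreeGroup.of 0) ^ (p / 2))⁻¹ }

namespace Stmt19Aux

open DihedralGroup Multiplicative

lemma r_pow {n : ℕ} (t : ZMod n) (m : ℕ) :
    (r t : DihedralGroup n) ^ m = r ((m : ZMod n) * t) := by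
  induction m with
  | zero => simp
  | succ k ih =>
      rw [pow_succ, ih, r_mul_r]
      push_cast
      ring_nf

lemma sr_pow_even {n : ℕ} (t : ZMod n) (m : ℕ) :
    (sr t : DihedralGroup n) ^ (2 * m) = 1 := by
  rw [pow_mul, sq, sr_mul_self, one_pow]

private lemma z2A : ∀ x y : ZMod 2, y - x = x + y := by decide
private lemma z2B : ∀ x y : ZMod 2, y - x = (x + 1) + (y + 1) := by decide
private lemma z2C : ∀ x y : ZMod 2, (y - x) + 1 = x + (y + 1) := by decide
private lemma z2D : ∀ x y : ZMod 2, (x + y) + 1 = (x + 1) + y := by decide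

private lemma ofAdd_key : ∀ a b c d e f : ZMod 2, a = c + e → b = d + f →
    (ofAdd (a, b) : Multiplicative (ZMod 2 × ZMod 2)) = ofAdd (c, d) * ofAdd (e, f) := by
  intro a b c d e f h1 h2
  subst h1; subst h2
  rw [← ofAdd_add, Prod.mk_add_mk]

variable {n : ℕ}

/-- The "abelianization-type" parity homomorphism on a dihedral group of even
index type: `r m ↦ (m, m)`, `sr m ↦ (m, m+1)` (mod 2). -/
def parA (h : 2 ∣ n) : DihedralGroup n →* Multiplicative (ZMod 2 × ZMod 2) :=
  MonoidHom.mk' (fun w => match w with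
    | .r m => ofAdd (ZMod.castHom h (ZMod 2) m, ZMod.castHom h (ZMod 2) m)
    | .sr m => ofAdd (ZMod.castHom h (ZMod 2) m, ZMod.castHom h (ZMod 2) m + 1))
  (by
    rintro (i | i) (j | j) <;>
      simp only [r_mul_r, r_mul_sr, sr_mul_r, sr_mul_sr]
    · exact ofAdd_key _ _ _ _ _ _ (by rw [map_add]) (by rw [map_add])
    · exact ofAdd_key _ _ _ _ _ _ (by rw [map_sub]; exact z2A _ _)
        (by rw [map_sub]; exact z2C _ _)
    · exact ofAdd_key _ _ _ _ _ _ (by rw [map_add])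
        (by rw [map_add]; exact z2D _ _)
    · exact ofAdd_key _ _ _ _ _ _ (by rw [map_sub]; exact z2A _ _)
        (by rw [map_sub]; exact z2B _ _))

@[simp] lemma parA_r (h : 2 ∣ n) (m : ZMod n) :
    parA h (r m) = ofAdd (ZMod.castHom h (ZMod 2) m, ZMod.castHom h (ZMod 2) m) := rfl

@[simp] lemma parA_sr (h : 2 ∣ n) (m : ZMod n) :
    parA h (sr m) = ofAdd (ZMod.castHom h (ZMod 2) m, ZMod.castHom h (ZMod 2) m + 1) := rfl

/-- The "reflection-detecting" parity homomorphism on a dihedral group of even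
index type: `r m ↦ (m, 0)`, `sr m ↦ (m, 1)` (mod 2). -/
def parB (h : 2 ∣ n) : DihedralGroup n →* Multiplicative (ZMod 2 × ZMod 2) :=
  MonoidHom.mk' (fun w => match w with
    | .r m => ofAdd (ZMod.castHom h (ZMod 2) m, 0)
    | .sr m => ofAdd (ZMod.castHom h (ZMod 2) m, 1))
  (by
    rintro (i | i) (j | j) <;>
      simp only [r_mul_r, r_mul_sr, sr_mul_r, sr_mul_sr]
    · exact ofAdd_key _ _ _ _ _ _ (by rw [map_add]) (by decide)
    · exact ofAdd_key _ _ _ _ _ _ (by rw [map_sub]; exact z2A _ _) (by decide)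
    · exact ofAdd_key _ _ _ _ _ _ (by rw [map_add]) (by decide)
    · exact ofAdd_key _ _ _ _ _ _ (by rw [map_sub]; exact z2A _ _) (by decide))

@[simp] lemma parB_r (h : 2 ∣ n) (m : ZMod n) :
    parB h (r m) = ofAdd (ZMod.castHom h (ZMod 2) m, 0) := rfl

@[simp] lemma parB_sr (h : 2 ∣ n) (m : ZMod n) :
    parB h (sr m) = ofAdd (ZMod.castHom h (ZMod 2) m, 1) := rfl

end Stmt19Aux

open Stmt19Aux DihedralGroup Multiplicative in
/-- Let A be the Artin group of type I₂(p), p = 4q (q ≥ 1), W the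
dihedral group of order 2p, μ : A → W the standard epimorphism (σᵢ ↦ sᵢ), and
ν_p¹ : A → W the extraordinary epimorphism σ₁ ↦ s₁, σ₂ ↦ s₂s₁.  Then for no
endomorphism Φ : A → A does μ ∘ Φ = ν_p¹. -/
theorem stmt19 (q : ℕ) (hq : 1 ≤ q)
    (μ ν : PresentedGroup (artinI2EvenRels (4 * q)) →* DihedralGroup (4 * q))
    (hμ0 : μ (PresentedGroup.of 0) = DihedralGroup.sr 0)
    (hμ1 : μ (PresentedGroup.of 1) = DihedralGroup.sr 1)
    (hν0 : ν (PresentedGroup.of 0) = DihedralGroup.sr 0)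
    (hν1 : ν (PresentedGroup.of 1) = DihedralGroup.sr 1 * DihedralGroup.sr 0) :
    ∀ Φ : PresentedGroup (artinI2EvenRels (4 * q)) →*
        PresentedGroup (artinI2EvenRels (4 * q)), μ.comp Φ ≠ ν := by
  intro Φ hΦ
  have h24 : (2 : ℕ) ∣ 4 * q := ⟨2 * q, by ring⟩
  have h28 : (2 : ℕ) ∣ 8 * q := ⟨4 * q, by ring⟩
  have hdiv : 4 * q / 2 = 2 * q := by omega
  -- the auxiliary homomorphism ρ : A → DihedralGroup (8q), σ₁ ↦ sr 0, σ₂ ↦ r 1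
  have hrel : ∀ w ∈ artinI2EvenRels (4 * q),
      FreeGroup.lift (![sr 0, r 1] : Fin 2 → DihedralGroup (8 * q)) w = 1 := by
    intro w hw
    rw [artinI2EvenRels, Set.mem_singleton_iff] at hw
    subst hw
    rw [hdiv, map_mul, map_inv, map_pow, map_pow, map_mul, map_mul]
    simp only [FreeGroup.lift_apply_of, Matrix.cons_val_zero, Matrix.cons_val_one, Matrix.head_cons]
    rw [sr_mul_r, r_mul_sr, sr_pow_even, sr_pow_even, inv_one, mul_one]
  set ρ : PresentedGroup (artinI2EvenRels (4 * q)) →* DihedralGroup (8 * q) :=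
    PresentedGroup.toGroup hrel with hρ
  have hρ0 : ρ (PresentedGroup.of 0) = sr 0 := by
    rw [hρ, PresentedGroup.toGroup.of]
    simp
  have hρ1 : ρ (PresentedGroup.of 1) = r 1 := by
    rw [hρ, PresentedGroup.toGroup.of]
    simp
  -- the two parity homomorphisms agree: parB ∘ ρ = parA ∘ μ
  have hcomp : (parB h28).comp ρ = (parA h24).comp μ := by
    apply PresentedGroup.ext
    intro i
    fin_cases i
    · show parB h28 (ρ (PresentedGroup.of 0)) = parA h24 (μ (PresentedGroup.of 0))
      rw [hρ0, hμ0, parB_sr, parA_sr, map_zero, map_zero]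
      decide
    · show parB h28 (ρ (PresentedGroup.of 1)) = parA h24 (μ (PresentedGroup.of 1))
      rw [hρ1, hμ1, parB_r, parA_sr, map_one, map_one]
      decide
  -- the braid relation inside A
  have hrelA : ((PresentedGroup.of 0 : PresentedGroup (artinI2EvenRels (4 * q))) *
      PresentedGroup.of 1) ^ (2 * q) =
      (PresentedGroup.of 1 * PresentedGroup.of 0) ^ (2 * q) := by
    have hm : (FreeGroup.of (0 : Fin 2) * FreeGroup.of 1) ^ (2 * q) *
        ((FreeGroup.of (1 : Fin 2) * FreeGroup.of 0) ^ (2 * q))⁻¹ ∈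
        artinI2EvenRels (4 * q) := by
      rw [artinI2EvenRels, Set.mem_singleton_iff, hdiv]
    have h1 : PresentedGroup.mk (artinI2EvenRels (4 * q))
        ((FreeGroup.of (0 : Fin 2) * FreeGroup.of 1) ^ (2 * q) *
          ((FreeGroup.of (1 : Fin 2) * FreeGroup.of 0) ^ (2 * q))⁻¹) = 1 :=
      (QuotientGroup.eq_one_iff _).mpr (Subgroup.subset_normalClosure hm)
    rw [map_mul, map_inv, map_pow, map_pow, map_mul, map_mul, mul_inv_eq_one] at h1
    exact h1
  -- push everything through ρ ∘ Φ
  have hxy : (ρ (Φ (PresentedGroup.of 0)) * ρ (Φ (PresentedGroup.of 1))) ^ (2 * q) =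
      (ρ (Φ (PresentedGroup.of 1)) * ρ (Φ (PresentedGroup.of 0))) ^ (2 * q) := by
    have h2 := congrArg (ρ.comp Φ) hrelA
    simpa only [map_pow, map_mul, MonoidHom.comp_apply] using h2
  -- parity values of the images
  have hμΦ0 : μ (Φ (PresentedGroup.of 0)) = sr 0 := by
    have h2 := DFunLike.congr_fun hΦ (PresentedGroup.of 0)
    rw [MonoidHom.comp_apply] at h2
    rw [h2, hν0]
  have hμΦ1 : μ (Φ (PresentedGroup.of 1)) = r (-1) := by
    have h2 := DFunLike.congr_fun hΦ (PresentedGroup.of 1)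
    rw [MonoidHom.comp_apply] at h2
    rw [h2, hν1, sr_mul_sr, zero_sub]
  have hx : (parB h28) (ρ (Φ (PresentedGroup.of 0))) = ofAdd (0, 1) := by
    have h2 := DFunLike.congr_fun hcomp (Φ (PresentedGroup.of 0))
    rw [MonoidHom.comp_apply, MonoidHom.comp_apply] at h2
    rw [h2, hμΦ0, parA_sr, map_zero]
    decide
  have hy : (parB h28) (ρ (Φ (PresentedGroup.of 1))) = ofAdd (1, 1) := by
    have h2 := DFunLike.congr_fun hcomp (Φ (PresentedGroup.of 1))
    rw [MonoidHom.comp_apply, MonoidHom.comp_apply] at h2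
    rw [h2, hμΦ1, parA_r, map_neg, map_one]
    decide
  -- x and y must be reflections with indices of distinct parity
  rcases hxe : ρ (Φ (PresentedGroup.of 0)) with m | u
  · rw [hxe, parB_r] at hx
    have h2 : (0 : ZMod 2) = 1 := (Prod.ext_iff.mp (Multiplicative.ofAdd.injective hx)).2
    exact absurd h2 (by decide)
  rcases hye : ρ (Φ (PresentedGroup.of 1)) with m | v
  · rw [hye, parB_r] at hy
    have h2 : (0 : ZMod 2) = 1 := (Prod.ext_iff.mp (Multiplicative.ofAdd.injective hy)).2
    exact absurd h2 (by decide)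
  rw [hxe, parB_sr] at hx
  rw [hye, parB_sr] at hy
  have hcu : ZMod.castHom h28 (ZMod 2) u = 0 :=
    (Prod.ext_iff.mp (Multiplicative.ofAdd.injective hx)).1
  have hcv : ZMod.castHom h28 (ZMod 2) v = 1 :=
    (Prod.ext_iff.mp (Multiplicative.ofAdd.injective hy)).1
  rw [hxe, hye, sr_mul_sr, sr_mul_sr, Stmt19Aux.r_pow, Stmt19Aux.r_pow] at hxy
  simp only [r.injEq] at hxy
  haveI : NeZero (8 * q) := ⟨by omega⟩
  have e2 : ((4 * q : ℕ) : ZMod (8 * q)) * (v - u) = 0 := by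
    push_cast at hxy ⊢
    linear_combination hxy
  have hw1 : ZMod.castHom h28 (ZMod 2) (v - u) = 1 := by
    rw [map_sub, hcu, hcv, sub_zero]
  have hval : (((v - u).val : ℕ) : ZMod (8 * q)) = v - u := ZMod.natCast_rightInverse (v - u)
  have e3 : ((4 * q * (v - u).val : ℕ) : ZMod (8 * q)) = 0 := by
    push_cast
    rw [hval]
    push_cast at e2
    exact e2
  obtain ⟨k, hk⟩ := (ZMod.natCast_eq_zero_iff _ _).mp e3
  have hval2 : (v - u).val = 2 * k :=
    Nat.eq_of_mul_eq_mul_left (show 0 < 4 * q by omega) (by rw [hk]; ring)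
  have hw0 : ZMod.castHom h28 (ZMod 2) (v - u) = 0 := by
    rw [← hval, map_natCast, hval2]
    push_cast
    rw [show (2 : ZMod 2) = 0 by decide, zero_mul]
  rw [hw0] at hw1
  exact absurd hw1 (by decide)
end
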